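/- Every finite game has a dual vector that is both strong and full; that is, a dual vector α such that D(c,α) > 0 for every pure strategy profile c with probability zero in all correlated equilibria, and such that for all i and all c_i, d_i ∈ C_i, α_i(d_i|c_i) > 0 whenever β_i(d_i|c_i) > 0 for some dual vector β. -/

import Mathlib

open scoped BigOperators

section Prelim

variable {S : Type} [Fintype S] [DecidableEq S]

/-- `σ` is a mixed strategy (probability distribution) on the finite set `S`. -/
def IsMixed (σ : S → ℝ) : Prop := (∀ s, 0 ≤ σ s) ∧ ∑ s, σ s = 1

/-- The Dirac measure `δ_s`. -/
def dirac (s : S) : S → ℝ := fun d => if d = s then 1 else 0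

/-- `α_i * σ_i`, the image of the mixed strategy `σ` under the deviation plan `αᵢ`,
where `αᵢ c d` is the probability `αᵢ(d | c)`. -/
def devImage (αᵢ : S → S → ℝ) (σ : S → ℝ) : S → ℝ := fun d => ∑ c, σ c * αᵢ c d

/-- `σ` is `αᵢ`-stationary: `αᵢ * σ = σ`. -/
def IsStationary' (αᵢ : S → S → ℝ) (σ : S → ℝ) : Prop := devImage αᵢ σ = σ

/-- A nonempty `B ⊆ S` is `αᵢ`-absorbing if `supp (αᵢ * c) ⊆ B` for all `c ∈ B`. -/
def IsAbsorbing (αᵢ : S → S → ℝ) (B : Finset S) : Prop :=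
  B.Nonempty ∧ ∀ c ∈ B, ∀ d, 0 < αᵢ c d → d ∈ B

/-- A minimal absorbing set: an absorbing set containing no proper nonempty absorbing subset. -/
def IsMinimalAbsorbing (αᵢ : S → S → ℝ) (B : Finset S) : Prop :=
  IsAbsorbing αᵢ B ∧ ∀ B' ⊆ B, IsAbsorbing αᵢ B' → B' = B

/-- `C_i/α_i`: the set of `αᵢ`-stationary mixed strategies whose support is contained
in some minimal `αᵢ`-absorbing set. -/
def ReducedSet (αᵢ : S → S → ℝ) : Set (S → ℝ) :=
  {σ | IsMixed σ ∧ IsStationary' αᵢ σ ∧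
    ∃ B : Finset S, IsMinimalAbsorbing αᵢ B ∧ ∀ s, σ s ≠ 0 → s ∈ B}

end Prelim

section Games

variable {N : Type} [Fintype N] [DecidableEq N]
  {C : N → Type} [∀ i, Fintype (C i)] [∀ i, DecidableEq (C i)]

/-- Marginal probability of the pure strategy `cᵢ` of player `i` under `μ`. -/
def marginal (μ : (∀ j, C j) → ℝ) (i : N) (cᵢ : C i) : ℝ :=
  ∑ c : ∀ j, C j, if c i = cᵢ then μ c else 0

/-- The incentive sum `∑_{c_{-i}} μ(c_{-i},cᵢ)[U_i(c_{-i},dᵢ) − U_i(c_{-i},cᵢ)]`. -/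
def incentiveSum (U : ∀ i : N, (∀ j, C j) → ℝ) (μ : (∀ j, C j) → ℝ) (i : N) (cᵢ dᵢ : C i) : ℝ :=
  ∑ c : ∀ j, C j, if c i = cᵢ then μ c * (U i (Function.update c i dᵢ) - U i c) else 0

/-- Correlated equilibrium. -/
def IsCorrelatedEq (U : ∀ i : N, (∀ j, C j) → ℝ) (μ : (∀ j, C j) → ℝ) : Prop :=
  (∀ c, 0 ≤ μ c) ∧ (∑ c : ∀ j, C j, μ c) = 1 ∧
    ∀ (i : N) (cᵢ dᵢ : C i), incentiveSum U μ i cᵢ dᵢ ≤ 0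

/-- Multilinear extension: payoff of player `i` under the mixed strategy profile `σ`. -/
def mixedPayoff (U : ∀ i : N, (∀ j, C j) → ℝ) (σ : ∀ j, C j → ℝ) (i : N) : ℝ :=
  ∑ c : ∀ j, C j, (∏ j, σ j (c j)) * U i c

/-- Nash equilibrium. -/
def IsNash (U : ∀ i : N, (∀ j, C j) → ℝ) (σ : ∀ j, C j → ℝ) : Prop :=
  (∀ i, IsMixed (σ i)) ∧
  ∀ (i : N) (dᵢ : C i),
    mixedPayoff U (Function.update σ i (dirac dᵢ)) i ≤ mixedPayoff U σ i

/-- `D(c, α) = ∑_i [U_i(c_{-i}, α_i * c_i) − U_i(c)]`. -/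
def devGain (U : ∀ i : N, (∀ j, C j) → ℝ) (α : ∀ i, C i → C i → ℝ) (c : ∀ j, C j) : ℝ :=
  ∑ i, ((∑ dᵢ, α i (c i) dᵢ * U i (Function.update c i dᵢ)) - U i c)

/-- A dual vector: a profile of deviation plans with `D(c,α) ≥ 0` for all `c`. -/
def IsDualVector (U : ∀ i : N, (∀ j, C j) → ℝ) (α : ∀ i, C i → C i → ℝ) : Prop :=
  (∀ (i : N) (cᵢ : C i), IsMixed (α i cᵢ)) ∧ ∀ c, 0 ≤ devGain U α c

/-- A strong dual vector: `D(c,α) > 0` whenever `c` has probability zero in all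
correlated equilibria. -/
def IsStrong (U : ∀ i : N, (∀ j, C j) → ℝ) (α : ∀ i, C i → C i → ℝ) : Prop :=
  ∀ c : ∀ j, C j, (∀ μ, IsCorrelatedEq U μ → μ c = 0) → 0 < devGain U α c

/-- A full dual vector: `α_i(dᵢ|cᵢ) > 0` whenever `β_i(dᵢ|cᵢ) > 0` for some dual vector `β`. -/
def IsFull (U : ∀ i : N, (∀ j, C j) → ℝ) (α : ∀ i, C i → C i → ℝ) : Prop :=
  ∀ (i : N) (cᵢ dᵢ : C i),
    (∃ β : ∀ i, C i → C i → ℝ, IsDualVector U β ∧ 0 < β i cᵢ dᵢ) → 0 < α i cᵢ dᵢ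

end Games

/-! If a pure profile `c` has probability zero in every correlated equilibrium, the linear
program "find a distribution satisfying all incentive constraints and charging `c`" is infeasible,
so by Farkas' lemma (via Fourier–Motzkin elimination) some nonnegative combination of
the incentive constraints has nonnegative gain everywhere and positive gain at `c`; scaled down,
it is a dual vector `α` with `D(c, α) > 0`. Since `D(c, ·)` is affine and the dual vectors form a
convex set, the uniform average of these finitely many dual vectors, of one dual vector
witnessing each possible positive entry `β_i(d_i | c_i) > 0`, and of the identity plan is a dual
vector that is both strong and full. -/

open Finset

section Farkas

variable {ι d : Type*} [Fintype d]

/-- The projection onto the hyperplane `{v | v ⬝ᵥ y = 0}` along `a` (when `a ⬝ᵥ y ≠ 0`). -/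
noncomputable def projAlong (a y : d → ℝ) : (d → ℝ) →ₗ[ℝ] d → ℝ where
  toFun v := v - ((v ⬝ᵥ y) / (a ⬝ᵥ y)) • a
  map_add' v w := by rw [add_dotProduct, add_div, add_smul]; abel
  map_smul' r v := by
    rw [smul_dotProduct, smul_eq_mul, mul_div_assoc, mul_smul, RingHom.id_apply, smul_sub]

lemma projAlong_apply (a y v : d → ℝ) : projAlong a y v = v - ((v ⬝ᵥ y) / (a ⬝ᵥ y)) • a := rfl

lemma projAlong_self {a y : d → ℝ} (h : a ⬝ᵥ y ≠ 0) : projAlong a y a = 0 := by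
  rw [projAlong_apply, div_self h, one_smul, sub_self]

lemma projAlong_dotProduct (a y v y' : d → ℝ) :
    projAlong a y v ⬝ᵥ y' = v ⬝ᵥ (y' - ((a ⬝ᵥ y') / (a ⬝ᵥ y)) • y) := by
  rw [projAlong_apply, sub_dotProduct, smul_dotProduct, dotProduct_sub, dotProduct_smul,
    smul_eq_mul, smul_eq_mul, dotProduct_comm v y]
  ring

/-- One Fourier–Motzkin step: if the new generator `A j` violates the certificate `y` of the
smaller system, eliminate it by projecting everything along `A j` onto `y`'s hyperplane. -/
lemma farkas_insert [DecidableEq ι] {s : Finset ι} {j : ι} (hj : j ∉ s)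
    (ih : ∀ (A : ι → d → ℝ) (b : d → ℝ), (∃ μ : ι → ℝ, 0 ≤ μ ∧ ∑ k ∈ s, μ k • A k = b) ∨
      ∃ y, (∀ k ∈ s, 0 ≤ A k ⬝ᵥ y) ∧ b ⬝ᵥ y < 0)
    (A : ι → d → ℝ) (b : d → ℝ) :
    (∃ μ : ι → ℝ, 0 ≤ μ ∧ ∑ k ∈ insert j s, μ k • A k = b) ∨
      ∃ y, (∀ k ∈ insert j s, 0 ≤ A k ⬝ᵥ y) ∧ b ⬝ᵥ y < 0 := by
  have sum_update (μ : ι → ℝ) (r : ℝ) :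
      ∑ k ∈ s, Function.update μ j r k • A k = ∑ k ∈ s, μ k • A k :=
    sum_congr rfl fun k hk => by rw [Function.update_of_ne (ne_of_mem_of_not_mem hk hj)]
  rcases ih A b with ⟨μ, hμ, hb⟩ | ⟨y, hy, hby⟩
  · refine .inl ⟨Function.update μ j 0, le_update_iff.2 ⟨le_rfl, fun k _ => hμ k⟩, ?_⟩
    rw [sum_insert hj, Function.update_self, zero_smul, zero_add, sum_update, hb]
  by_cases hay : 0 ≤ A j ⬝ᵥ y
  · exact .inr ⟨y, fun k hk => (mem_insert.1 hk).elim (· ▸ hay) (hy k), hby⟩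
  push Not at hay
  set π := projAlong (A j) y
  rcases ih (fun k => π (A k)) (π b) with ⟨μ, hμ, hb'⟩ | ⟨y', hy', hby'⟩
  · set w := b - ∑ k ∈ s, μ k • A k
    have hw : w = (w ⬝ᵥ y / (A j ⬝ᵥ y)) • A j := by
      have : π w = 0 := by simp only [w, map_sub, map_sum, map_smul, hb', sub_self]
      rwa [projAlong_apply, sub_eq_zero] at this
    have hwy : w ⬝ᵥ y < 0 := by
      have : 0 ≤ ∑ k ∈ s, μ k * (A k ⬝ᵥ y) :=
        sum_nonneg fun k hk => mul_nonneg (hμ k) (hy k hk)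
      simp only [w, sub_dotProduct, sum_dotProduct, smul_dotProduct, smul_eq_mul]
      linarith
    refine .inl ⟨Function.update μ j (w ⬝ᵥ y / (A j ⬝ᵥ y)),
      le_update_iff.2 ⟨(div_pos_of_neg_of_neg hwy hay).le, fun k _ => hμ k⟩, ?_⟩
    rw [sum_insert hj, Function.update_self, ← hw, sum_update, sub_add_cancel]
  · refine .inr ⟨y' - ((A j ⬝ᵥ y') / (A j ⬝ᵥ y)) • y, fun k hk => ?_, ?_⟩
    · rcases mem_insert.1 hk with rfl | hk
      · rw [← projAlong_dotProduct, projAlong_self hay.ne, zero_dotProduct]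
      · rw [← projAlong_dotProduct]; exact hy' k hk
    · rwa [← projAlong_dotProduct]

theorem farkas_finset [DecidableEq ι] (s : Finset ι) (A : ι → d → ℝ) (b : d → ℝ) :
    (∃ μ : ι → ℝ, 0 ≤ μ ∧ ∑ k ∈ s, μ k • A k = b) ∨
      ∃ y, (∀ k ∈ s, 0 ≤ A k ⬝ᵥ y) ∧ b ⬝ᵥ y < 0 := by
  induction s using Finset.induction_on generalizing A b with
  | empty =>
    by_cases hb : b = 0
    · exact .inl ⟨0, le_rfl, by simp [hb]⟩
    · have : 0 < b ⬝ᵥ b := lt_of_le_of_ne (Fintype.sum_nonneg fun _ => mul_self_nonneg _)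
        (Ne.symm (dotProduct_self_eq_zero.not.2 hb))
      exact .inr ⟨-b, by simp, by simpa using this⟩
  | insert j s hj ih => exact farkas_insert hj ih A b

theorem farkas_le [Fintype ι] (A : ι → d → ℝ) (b : d → ℝ) :
    (∃ μ : ι → ℝ, 0 ≤ μ ∧ b ≤ ∑ k, μ k • A k) ∨
      ∃ y, 0 ≤ y ∧ (∀ k, A k ⬝ᵥ y ≤ 0) ∧ 0 < b ⬝ᵥ y := by
  classical
  rcases farkas_finset univ (Sum.elim A fun c => -Pi.single c 1) b with
    ⟨μ, hμ, hb⟩ | ⟨y, hy, hby⟩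
  · refine .inl ⟨μ ∘ Sum.inl, fun k => hμ _, fun c => ?_⟩
    have hsum : (∑ k, μ k • Sum.elim A (fun c => -Pi.single c 1) k) c
        = (∑ k, μ (.inl k) • A k) c - μ (.inr c) := by
      simp [Fintype.sum_sum_type, Finset.sum_apply, Pi.single_apply, sub_eq_add_neg]
    rw [← hb, hsum]
    exact sub_le_self _ (hμ _)
  · refine .inr ⟨-y, fun c => ?_, fun k => ?_, by simpa using hby⟩
    · simpa [single_dotProduct] using hy (.inr c) (mem_univ _)
    · simpa using hy (.inl k) (mem_univ _)

end Farkas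

section Games

variable {N : Type} {C : N → Type} {J : Type} [Fintype J]

noncomputable def avgPlan (F : J → ∀ i, C i → C i → ℝ) : ∀ i, C i → C i → ℝ :=
  fun i a d => (∑ j, F j i a d) / Fintype.card J

lemma avgPlan_pos {F : J → ∀ i, C i → C i → ℝ} (hF : ∀ j i a d, 0 ≤ F j i a d) {j : J} {i : N}
    {a d : C i} (h : 0 < F j i a d) : 0 < avgPlan F i a d :=
  div_pos (sum_pos' (fun j _ => hF j i a d) ⟨j, mem_univ j, h⟩)
    (Nat.cast_pos.2 (Fintype.card_pos_iff.2 ⟨j⟩))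

variable [∀ i, Fintype (C i)]

/-- Rates `z / M` off the diagonal, the remaining mass left on `a` itself; that mass does not
contribute to the gain. -/
noncomputable def rescaledPlan [∀ i, DecidableEq (C i)] (z : ∀ i, C i → C i → ℝ) (M : ℝ) :
    ∀ i, C i → C i → ℝ :=
  fun i a d => z i a d / M + if d = a then 1 - (∑ d', z i a d') / M else 0

lemma sum_rescaledPlan [∀ i, DecidableEq (C i)] (z : ∀ i, C i → C i → ℝ) (M : ℝ) (i : N)
    (a : C i) : ∑ d, rescaledPlan z M i a d = 1 := by
  simp only [rescaledPlan, sum_add_distrib, ← sum_div, sum_ite_eq', mem_univ, if_true]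
  ring

variable [Fintype N] [DecidableEq N] (U : N → (∀ j, C j) → ℝ)

def linearGain (z : ∀ i, C i → C i → ℝ) (c : ∀ j, C j) : ℝ :=
  ∑ i, ∑ d, z i (c i) d * (U i (Function.update c i d) - U i c)

lemma devGain_eq_linearGain {α : ∀ i, C i → C i → ℝ} (hα : ∀ i a, ∑ d, α i a d = 1)
    (c : ∀ j, C j) : devGain U α c = linearGain U α c := by
  refine sum_congr rfl fun i _ => ?_
  simp only [mul_sub, sum_sub_distrib, ← sum_mul, hα, one_mul]

lemma devGain_avgPlan [Nonempty J] (F : J → ∀ i, C i → C i → ℝ) (c : ∀ j, C j) :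
    devGain U (avgPlan F) c = (∑ j, devGain U (F j) c) / Fintype.card J := by
  have hJ : (Fintype.card J : ℝ) ≠ 0 := Nat.cast_ne_zero.2 Fintype.card_ne_zero
  simp only [devGain, avgPlan]
  rw [sum_comm, sum_div]
  refine sum_congr rfl fun i _ => ?_
  rw [sum_sub_distrib, sum_const, card_univ, nsmul_eq_mul, sum_comm]
  simp only [div_mul_eq_mul_div, sum_mul, ← sum_div]
  field_simp

lemma isDualVector_avgPlan [Nonempty J] {F : J → ∀ i, C i → C i → ℝ}
    (hF : ∀ j, IsDualVector U (F j)) : IsDualVector U (avgPlan F) := by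
  have hJ : (0 : ℝ) < Fintype.card J := Nat.cast_pos.2 Fintype.card_pos
  refine ⟨fun i a => ⟨fun d => div_nonneg (sum_nonneg fun j _ => ((hF j).1 i a).1 d) hJ.le, ?_⟩,
    fun c => ?_⟩
  · simp only [avgPlan, ← sum_div]
    rw [sum_comm]
    simp [((hF _).1 i a).2, hJ.ne']
  · rw [devGain_avgPlan]
    exact div_nonneg (sum_nonneg fun j _ => (hF j).2 c) hJ.le

lemma devGain_avgPlan_pos {F : J → ∀ i, C i → C i → ℝ} (hF : ∀ j, IsDualVector U (F j))
    {j : J} {c : ∀ j, C j} (h : 0 < devGain U (F j) c) : 0 < devGain U (avgPlan F) c := by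
  have : Nonempty J := ⟨j⟩
  rw [devGain_avgPlan]
  exact div_pos (sum_pos' (fun j _ => (hF j).2 c) ⟨j, mem_univ j, h⟩)
    (Nat.cast_pos.2 Fintype.card_pos)

variable [∀ i, DecidableEq (C i)]

lemma linearGain_rescaledPlan (z : ∀ i, C i → C i → ℝ) (M : ℝ) (c : ∀ j, C j) :
    linearGain U (rescaledPlan z M) c = linearGain U z c / M := by
  simp only [linearGain, rescaledPlan, add_mul, sum_add_distrib, ite_mul, zero_mul, sum_ite_eq',
    mem_univ, if_true, Function.update_eq_self, sub_self, mul_zero, add_zero, sum_div,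
    div_mul_eq_mul_div]

lemma exists_isDualVector_of_linearGain_nonneg {z : ∀ i, C i → C i → ℝ}
    (hz : ∀ i a d, 0 ≤ z i a d) (hgain : ∀ c, 0 ≤ linearGain U z c) :
    ∃ α, IsDualVector U α ∧ ∀ c, 0 < linearGain U z c → 0 < devGain U α c := by
  have hrow : ∀ i a, 0 ≤ ∑ d, z i a d := fun i a => sum_nonneg fun d _ => hz i a d
  have hblock : ∀ i, 0 ≤ ∑ a, ∑ d, z i a d := fun i => sum_nonneg fun a _ => hrow i a
  set M := 1 + ∑ i, ∑ a, ∑ d, z i a d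
  have hM : 0 < M := by linarith [sum_nonneg fun i (_ : i ∈ univ) => hblock i]
  have hrow_lt : ∀ i a, ∑ d, z i a d < M := fun i a => by
    have h₁ : ∑ d, z i a d ≤ ∑ a, ∑ d, z i a d :=
      single_le_sum (fun a _ => hrow i a) (mem_univ a)
    have h₂ : ∑ a, ∑ d, z i a d ≤ ∑ i, ∑ a, ∑ d, z i a d :=
      single_le_sum (f := fun i => ∑ a, ∑ d, z i a d) (fun i _ => hblock i) (mem_univ i)
    linarith
  have hgain_eq : ∀ c, devGain U (rescaledPlan z M) c = linearGain U z c / M := fun c => by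
    rw [devGain_eq_linearGain U (sum_rescaledPlan z M), linearGain_rescaledPlan]
  refine ⟨rescaledPlan z M, ⟨fun i a => ⟨fun d => ?_, sum_rescaledPlan z M i a⟩, fun c => ?_⟩,
    fun c hc => ?_⟩
  · have : 0 ≤ 1 - (∑ d', z i a d') / M := by
      rw [sub_nonneg, div_le_one hM]; exact (hrow_lt i a).le
    exact add_nonneg (div_nonneg (hz i a d) hM.le) (by split_ifs <;> simp [this])
  · rw [hgain_eq]; exact div_nonneg (hgain c) hM.le
  · rw [hgain_eq]; exact div_pos hc hM

def incentiveVec (t : Σ i, C i × C i) (c : ∀ j, C j) : ℝ :=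
  if c t.1 = t.2.1 then U t.1 (Function.update c t.1 t.2.2) - U t.1 c else 0

lemma incentiveSum_eq_incentiveVec_dotProduct (μ : (∀ j, C j) → ℝ) (i : N) (a b : C i) :
    incentiveSum U μ i a b = incentiveVec U ⟨i, (a, b)⟩ ⬝ᵥ μ := by
  simp only [incentiveSum, incentiveVec, dotProduct, ite_mul, zero_mul, mul_comm (μ _)]

lemma sum_smul_incentiveVec_apply (z : (Σ i, C i × C i) → ℝ) (c : ∀ j, C j) :
    (∑ t, z t • incentiveVec U t) c = linearGain U (fun i a d => z ⟨i, (a, d)⟩) c := by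
  simp only [Finset.sum_apply, Pi.smul_apply, smul_eq_mul, incentiveVec, mul_ite, mul_zero,
    Fintype.sum_sigma, Fintype.sum_prod_type, linearGain]
  refine sum_congr rfl fun i _ => ?_
  rw [sum_comm]
  simp only [sum_ite_eq, mem_univ, if_true]

lemma isCorrelatedEq_inv_sum_smul {y : (∀ j, C j) → ℝ} (hy : 0 ≤ y) (hS : 0 < ∑ c, y c)
    (hinc : ∀ i a b, incentiveSum U y i a b ≤ 0) : IsCorrelatedEq U ((∑ c, y c)⁻¹ • y) := by
  refine ⟨fun c => mul_nonneg (inv_nonneg.2 hS.le) (hy c), ?_, fun i a b => ?_⟩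
  · simp only [Pi.smul_apply, smul_eq_mul, ← mul_sum, inv_mul_cancel₀ hS.ne']
  · rw [incentiveSum_eq_incentiveVec_dotProduct, dotProduct_smul, smul_eq_mul,
      ← incentiveSum_eq_incentiveVec_dotProduct]
    exact mul_nonpos_of_nonneg_of_nonpos (inv_nonneg.2 hS.le) (hinc i a b)

/-- By Farkas' lemma, either some correlated equilibrium charges `c₀`, or nonnegative
deviation rates have nonnegative gain everywhere and gain `≥ 1` at `c₀`. -/
theorem exists_isDualVector_devGain_pos (c₀ : ∀ j, C j)
    (h : ∀ μ, IsCorrelatedEq U μ → μ c₀ = 0) : ∃ α, IsDualVector U α ∧ 0 < devGain U α c₀ := by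
  rcases farkas_le (incentiveVec U) (Pi.single c₀ 1) with ⟨z, hz, hle⟩ | ⟨y, hy, hinc, hpos⟩
  · have hgain : ∀ c, (Pi.single c₀ 1 : (∀ j, C j) → ℝ) c ≤
        linearGain U (fun i a d => z ⟨i, (a, d)⟩) c :=
      fun c => (hle c).trans_eq (sum_smul_incentiveVec_apply U z c)
    obtain ⟨α, hα, hα_pos⟩ := exists_isDualVector_of_linearGain_nonneg U (fun i a d => hz _)
      fun c => (Pi.single_nonneg.2 zero_le_one c).trans (hgain c)
    exact ⟨α, hα, hα_pos c₀ (zero_lt_one.trans_le (by simpa using hgain c₀))⟩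
  · rw [single_dotProduct, one_mul] at hpos
    have hS : 0 < ∑ c, y c := hpos.trans_le (single_le_sum (fun c _ => hy c) (mem_univ c₀))
    have hμ := h _ (isCorrelatedEq_inv_sum_smul U hy hS fun i a b =>
      (incentiveSum_eq_incentiveVec_dotProduct U y i a b).symm ▸ hinc _)
    exact absurd hμ (mul_pos (inv_pos.2 hS) hpos).ne'

lemma isDualVector_dirac : IsDualVector U fun _ a => dirac a := by
  refine ⟨fun i a => ⟨fun d => ite_nonneg zero_le_one le_rfl, by simp [dirac]⟩, fun c => ?_⟩
  simp [devGain, dirac]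

lemma exists_isDualVector_imp {P : Prop} {Q : (∀ i, C i → C i → ℝ) → Prop}
    (h : P → ∃ α, IsDualVector U α ∧ Q α) : ∃ α, IsDualVector U α ∧ (P → Q α) := by
  by_cases hP : P
  · obtain ⟨α, hα, hQ⟩ := h hP
    exact ⟨α, hα, fun _ => hQ⟩
  · exact ⟨_, isDualVector_dirac U, fun h' => absurd h' hP⟩

end Games

theorem exists_strong_full_dual_vector_general
    {N : Type} [Fintype N] [DecidableEq N]
    {C : N → Type} [∀ i, Fintype (C i)] [∀ i, DecidableEq (C i)]
    (U : ∀ i : N, (∀ j, C j) → ℝ) :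
    ∃ α : ∀ i, C i → C i → ℝ, IsDualVector U α ∧ IsStrong U α ∧ IsFull U α := by
  choose F hF hF_strong using fun c =>
    exists_isDualVector_imp U (exists_isDualVector_devGain_pos U c)
  choose G hG hG_full using fun t : Σ i, C i × C i =>
    exists_isDualVector_imp U (Q := fun α => 0 < α t.1 t.2.1 t.2.2) id
  let H : Option ((∀ j, C j) ⊕ Σ i, C i × C i) → ∀ i, C i → C i → ℝ :=
    fun k => k.elim (fun _ a => dirac a) (Sum.elim F G)
  have hH : ∀ k, IsDualVector U (H k) := by
    rintro (_ | c | t)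
    exacts [isDualVector_dirac U, hF c, hG t]
  refine ⟨avgPlan H, isDualVector_avgPlan U hH, fun c hc => ?_, fun i a d hd => ?_⟩
  · exact devGain_avgPlan_pos U hH (j := some (.inl c)) (hF_strong c hc)
  · exact avgPlan_pos (fun k i a d => ((hH k).1 i a).1 d) (j := some (.inr ⟨i, (a, d)⟩))
      (hG_full ⟨i, (a, d)⟩ hd)

/-- Every finite game has a dual vector that is both strong and full. -/
theorem exists_strong_full_dual_vector
    {N : Type} [Fintype N] [DecidableEq N] [Nonempty N]
    {C : N → Type} [∀ i, Fintype (C i)] [∀ i, DecidableEq (C i)] [∀ i, Nonempty (C i)]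
    (U : ∀ i : N, (∀ j, C j) → ℝ) :
    ∃ α : ∀ i, C i → C i → ℝ, IsDualVector U α ∧ IsStrong U α ∧ IsFull U α :=
  exists_strong_full_dual_vector_general U
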